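/- arXiv:1109.0312 — 4 statements merged into one kernel-verified Lean document; each statement's English description precedes it below -/
import Mathlib

section
/- The set of points of any quadtree cell of [0,1)^d forms a contiguous interval in the z-order: if p, q, s ∈ [0,1)^d satisfy σ(p) ≤ σ(q) ≤ σ(s) in the z-order (shuffle order) and p and s lie in the same quadtree cell C at level i, then q also lies in C. -/
/-- The `j`-th binary digit of a real number. -/
noncomputable def rbit (x : ℝ) (j : ℕ) : ℕ := (⌊x * 2 ^ j⌋ % 2).toNat

/-- The shuffle (z-order value) of a point `p ∈ [0,1)^d`: the real number whose
binary expansion interleaves the fractional bits of the coordinates of `p`,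
coordinate `0` first at each bit level. -/
noncomputable def shuffle (d : ℕ) [NeZero d] (p : Fin d → ℝ) : ℝ :=
  ∑' m : ℕ, (rbit (p ⟨m % d, Nat.mod_lt m (NeZero.pos d)⟩) (m / d + 1) : ℝ) / 2 ^ (m + 1)

lemma rbit_le_one (x : ℝ) (j : ℕ) : rbit x j ≤ 1 := by
  unfold rbit; generalize ⌊x * 2 ^ j⌋ = a; omega

lemma floor_succ (x : ℝ) (j : ℕ) :
    ⌊x * 2 ^ (j+1)⌋ = 2 * ⌊x * 2 ^ j⌋ + (rbit x (j+1) : ℤ) := by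
  have h1 : (⌊x * 2 ^ j⌋ : ℝ) ≤ x * 2 ^ j := Int.floor_le _
  have h2 : x * 2 ^ j < ⌊x * 2 ^ j⌋ + 1 := Int.lt_floor_add_one _
  have he : x * 2 ^ (j+1) = 2 * (x * 2 ^ j) := by ring
  have hb1 : 2 * ⌊x * 2 ^ j⌋ ≤ ⌊x * 2 ^ (j+1)⌋ := by
    rw [Int.le_floor]; push_cast; rw [he]; linarith
  have hb2 : ⌊x * 2 ^ (j+1)⌋ < 2 * ⌊x * 2 ^ j⌋ + 2 := by
    rw [Int.floor_lt]; push_cast; rw [he]; linarith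
  unfold rbit
  generalize ⌊x * 2 ^ (j+1)⌋ = b at *
  omega

lemma floor_step (x y : ℝ) (j : ℕ) (h : ⌊x*2^(j+1)⌋ = ⌊y*2^(j+1)⌋) :
    ⌊x*2^j⌋ = ⌊y*2^j⌋ := by
  have h1 := floor_succ x j
  have h2 := floor_succ y j
  have h3 := rbit_le_one x (j+1)
  have h4 := rbit_le_one y (j+1)
  omega

lemma exists_bit_zero (x : ℝ) (M : ℕ) : ∃ j, M < j ∧ rbit x j = 0 := by
  by_contra h
  push_neg at h
  have hone : ∀ j, M < j → rbit x j = 1 := by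
    intro j hj
    have := rbit_le_one x j
    have := h j hj
    omega
  have key : ∀ n, ⌊x * 2 ^ (M + n)⌋ = 2 ^ n * ⌊x * 2 ^ M⌋ + 2 ^ n - 1 := by
    intro n
    induction n with
    | zero => simp
    | succ n ih =>
      have h0 := floor_succ x (M + n)
      rw [hone (M+n+1) (by omega)] at h0
      rw [show M + (n+1) = (M+n)+1 by ring, h0, ih]
      push_cast
      ring
  set a := ⌊x * 2 ^ M⌋ with ha
  have hA : x * 2 ^ M < a + 1 := Int.lt_floor_add_one _
  have h2 : (0:ℝ) < 2 ^ M := by positivity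
  have hxlt : x < ((a:ℝ) + 1) / 2 ^ M := by
    rw [lt_div_iff₀ h2]; linarith
  obtain ⟨n, hn⟩ := exists_pow_lt_of_lt_one (sub_pos.mpr hxlt) (by norm_num : (1/2:ℝ) < 1)
  have hfl : ((2:ℝ) ^ n * a + 2 ^ n - 1) ≤ x * 2 ^ (M + n) := by
    have h3 := Int.floor_le (x * 2 ^ (M+n))
    rw [key n] at h3
    push_cast at h3
    linarith
  have h3 : (0:ℝ) < 2 ^ n := by positivity
  have hpow : (2:ℝ) ^ (M+n) = 2^M * 2^n := by rw [pow_add]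
  have e1 : (1/2:ℝ)^n = 1/2^n := by rw [div_pow, one_pow]
  have hM1 : (1:ℝ) ≤ 2^M := one_le_pow₀ (by norm_num)
  rw [e1] at hn
  have h4 : 2^M < ((a:ℝ)+1)*2^n - x*2^M*2^n := by
    have := mul_lt_mul_of_pos_left hn (mul_pos h2 h3)
    calc (2:ℝ)^M = 2^M*2^n * (1/2^n) := by field_simp
    _ < 2^M*2^n * (((a:ℝ)+1)/2^M - x) := this
    _ = ((a:ℝ)+1)*2^n - x*2^M*2^n := by field_simp
  rw [hpow] at hfl
  nlinarith

noncomputable def bb (d : ℕ) [NeZero d] (x : Fin d → ℝ) (m : ℕ) : ℕ :=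
  rbit (x ⟨m % d, Nat.mod_lt m (NeZero.pos d)⟩) (m / d + 1)

lemma shuffle_eq_tsum (d : ℕ) [NeZero d] (x : Fin d → ℝ) :
    shuffle d x = ∑' m, (bb d x m : ℝ) / 2 ^ (m+1) := rfl

lemma bb_le_one (d : ℕ) [NeZero d] (x : Fin d → ℝ) (m : ℕ) : bb d x m ≤ 1 :=
  rbit_le_one _ _

lemma geo_summable : Summable fun m : ℕ => (1:ℝ)/2^(m+1) := by
  have h : Summable fun m : ℕ => (1/2:ℝ)^(m+1) :=
    summable_geometric_two.comp_injective Nat.succ_injective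
  refine h.congr fun m => ?_
  rw [div_pow, one_pow]

lemma bb_summable (d : ℕ) [NeZero d] (x : Fin d → ℝ) :
    Summable fun m => (bb d x m : ℝ)/2^(m+1) := by
  refine Summable.of_nonneg_of_le (fun m => by positivity) (fun m => ?_) geo_summable
  have h1 : (bb d x m : ℝ) ≤ 1 := by exact_mod_cast bb_le_one d x m
  gcongr

lemma pSum_le (d : ℕ) [NeZero d] (x : Fin d → ℝ) (M : ℕ) :
    ∑ m ∈ Finset.range M, (bb d x m : ℝ)/2^(m+1) ≤ shuffle d x := by
  rw [shuffle_eq_tsum, ← Summable.sum_add_tsum_nat_add M (bb_summable d x)]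
  have h : (0:ℝ) ≤ ∑' m : ℕ, (bb d x (m+M) : ℝ)/2^(m+M+1) :=
    tsum_nonneg fun m => by positivity
  linarith

lemma bb_apply (d : ℕ) [NeZero d] (x : Fin d → ℝ) (k : Fin d) (j : ℕ) :
    bb d x (k + j * d) = rbit (x k) (j + 1) := by
  have hd := NeZero.pos d
  have h1 : ((k:ℕ) + j * d) % d = k := by
    rw [Nat.add_mul_mod_self_right, Nat.mod_eq_of_lt k.isLt]
  have h2 : ((k:ℕ) + j * d) / d = j := by
    rw [Nat.add_mul_div_right _ _ hd, Nat.div_eq_of_lt k.isLt, Nat.zero_add]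
  unfold bb
  congr 1
  · exact congrArg x (Fin.ext h1)
  · rw [h2]

lemma tsum_geo (M : ℕ) : ∑' m : ℕ, (1:ℝ)/2^(m+M+1) = 1/2^M := by
  have h : ∀ m : ℕ, (1:ℝ)/2^(m+M+1) = (1/2^M)/2/2^m := by
    intro m
    rw [show m+M+1 = M+1+m by ring, pow_add, pow_succ]
    field_simp
  rw [tsum_congr h, tsum_geometric_two' (1/2^M)]

lemma shuffle_lt (d : ℕ) [NeZero d] (x : Fin d → ℝ) (M : ℕ) :
    shuffle d x < (∑ m ∈ Finset.range M, (bb d x m : ℝ)/2^(m+1)) + 1/2^M := by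
  rw [shuffle_eq_tsum, ← Summable.sum_add_tsum_nat_add M (bb_summable d x)]
  have hd := NeZero.pos d
  obtain ⟨j, hj, hj0⟩ := exists_bit_zero (x ⟨0, hd⟩) M
  set m' := (j-1) * d with hm'
  have hbz : bb d x m' = 0 := by
    have := bb_apply d x ⟨0, hd⟩ (j-1)
    simp only [Fin.val_mk, Nat.zero_add] at this
    rw [hm', this, show j - 1 + 1 = j by omega, hj0]
  have hm'M : M ≤ m' := by
    calc M ≤ j - 1 := by omega
    _ = (j-1) * 1 := (Nat.mul_one _).symm
    _ ≤ (j-1) * d := Nat.mul_le_mul_left _ hd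
  have htail : (∑' m : ℕ, (bb d x (m+M) : ℝ)/2^(m+M+1)) < ∑' m : ℕ, (1:ℝ)/2^(m+M+1) := by
    apply Summable.tsum_lt_tsum_of_nonneg (i := m' - M)
    · intro n; positivity
    · intro n
      have h1 : (bb d x (n+M) : ℝ) ≤ 1 := by exact_mod_cast bb_le_one d x (n+M)
      gcongr
    · rw [show m' - M + M = m' by omega, hbz]
      norm_num
    · exact (summable_nat_add_iff (f := fun m : ℕ => (1:ℝ)/2^(m+1)) M).mpr geo_summable
  rw [tsum_geo M] at htail
  linarith

/-- The points of a quadtree cell of `[0,1)^d` form a contiguous interval in the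
z-order: if `σ(p) ≤ σ(q) ≤ σ(s)` and `p, s` lie in the same level-`i` quadtree
cell, then so does `q`. -/
theorem stmt1 (d i : ℕ) [NeZero d] (p q s : Fin d → ℝ)
    (hp : ∀ k, p k ∈ Set.Ico (0:ℝ) 1) (hq : ∀ k, q k ∈ Set.Ico (0:ℝ) 1)
    (hs : ∀ k, s k ∈ Set.Ico (0:ℝ) 1)
    (m : Fin d → ℤ) (hm : ∀ k, 0 ≤ m k ∧ m k < 2 ^ i)
    (hpC : ∀ k, (m k : ℝ) / 2 ^ i ≤ p k ∧ p k < ((m k : ℝ) + 1) / 2 ^ i)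
    (hsC : ∀ k, (m k : ℝ) / 2 ^ i ≤ s k ∧ s k < ((m k : ℝ) + 1) / 2 ^ i)
    (h1 : shuffle d p ≤ shuffle d q) (h2 : shuffle d q ≤ shuffle d s) :
    ∀ k, (m k : ℝ) / 2 ^ i ≤ q k ∧ q k < ((m k : ℝ) + 1) / 2 ^ i := by
  have hd := NeZero.pos d
  have h2i : (0:ℝ) < 2 ^ i := by positivity
  have hfloor : ∀ (x : Fin d → ℝ),
      (∀ k, (m k : ℝ)/2^i ≤ x k ∧ x k < ((m k:ℝ)+1)/2^i) →
      ∀ k, ⌊x k * 2^i⌋ = m k := by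
    intro x hx k
    rw [Int.floor_eq_iff]
    constructor
    · rw [← div_le_iff₀ h2i]
      exact (hx k).1
    · push_cast
      rw [← lt_div_iff₀ h2i]
      exact (hx k).2
  have hlev : ∀ k : Fin d, ∀ n, ⌊p k * 2^(i-n)⌋ = ⌊s k * 2^(i-n)⌋ := by
    intro k n
    induction n with
    | zero => simpa using (hfloor p hpC k).trans (hfloor s hsC k).symm
    | succ n ih =>
      rcases le_or_gt i n with h | h
      · rw [show i - (n+1) = i - n by omega]
        exact ih
      · have he : i - n = (i - (n+1)) + 1 := by omega
        rw [he] at ih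
        exact floor_step _ _ _ ih
  have hbps : ∀ mm, mm < d*i → bb d p mm = bb d s mm := by
    intro mm hmm
    obtain ⟨e, he⟩ : ∃ e, mm / d = e := ⟨_, rfl⟩
    have hji : e + 1 ≤ i := by
      have : mm / d < i := Nat.div_lt_of_lt_mul hmm
      omega
    unfold bb rbit
    rw [he, show e + 1 = i - (i - (e+1)) by omega, hlev _ (i - (e+1))]
  have hbq : ∀ mm, mm < d*i → bb d q mm = bb d p mm := by
    intro mm
    induction mm using Nat.strong_induction_on with
    | _ mm ih =>
      intro hmm
      have hSq : ∑ x ∈ Finset.range mm, (bb d q x : ℝ)/2^(x+1)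
          = ∑ x ∈ Finset.range mm, (bb d p x : ℝ)/2^(x+1) :=
        Finset.sum_congr rfl fun x hx => by
          rw [ih x (Finset.mem_range.mp hx) (lt_trans (Finset.mem_range.mp hx) hmm)]
      have hSs : ∑ x ∈ Finset.range mm, (bb d s x : ℝ)/2^(x+1)
          = ∑ x ∈ Finset.range mm, (bb d p x : ℝ)/2^(x+1) :=
        Finset.sum_congr rfl fun x hx => by
          rw [← hbps x (lt_trans (Finset.mem_range.mp hx) hmm)]
      have B1 := pSum_le d p (mm+1)
      have B3 := pSum_le d q (mm+1)
      have B2 := shuffle_lt d q (mm+1)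
      have B4 := shuffle_lt d s (mm+1)
      rw [Finset.sum_range_succ] at B1 B2 B3 B4
      rw [hSq] at B2 B3
      rw [hSs] at B4
      have hbsm := hbps mm hmm
      have hp1 := bb_le_one d p mm
      have hq1 := bb_le_one d q mm
      rcases Nat.le_one_iff_eq_zero_or_eq_one.mp hp1 with hpc | hpc <;>
        rcases Nat.le_one_iff_eq_zero_or_eq_one.mp hq1 with hqc | hqc
      · rw [hpc, hqc]
      · -- bp = 0 (so bs = 0), bq = 1 : contradiction with h2
        exfalso
        rw [← hbsm, hpc] at B4
        rw [hqc] at B3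
        norm_num at B3 B4
        linarith
      · -- bp = 1, bq = 0 : contradiction with h1
        exfalso
        rw [hpc] at B1
        rw [hqc] at B2
        norm_num at B1 B2
        linarith
      · rw [hpc, hqc]
  intro k
  have hqfloor : ∀ j, j ≤ i → ⌊q k * 2^j⌋ = ⌊p k * 2^j⌋ := by
    intro j
    induction j with
    | zero =>
      intro _
      rw [pow_zero, mul_one, mul_one, Int.floor_eq_zero_iff.mpr (hq k),
        Int.floor_eq_zero_iff.mpr (hp k)]
    | succ j ihj =>
      intro hji
      have hrb : rbit (q k) (j+1) = rbit (p k) (j+1) := by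
        have hmlt : (k:ℕ) + j*d < d*i := by
          have h1' : (j+1)*d ≤ i*d := Nat.mul_le_mul_right d hji
          calc (k:ℕ) + j*d < d + j*d := by have := k.isLt; omega
          _ = (j+1)*d := by ring
          _ ≤ i*d := h1'
          _ = d*i := Nat.mul_comm i d
        have hb := hbq _ hmlt
        rw [bb_apply, bb_apply] at hb
        exact hb
      rw [floor_succ, floor_succ, ihj (by omega), hrb]
  have hfq : ⌊q k * 2^i⌋ = m k := by rw [hqfloor i le_rfl, hfloor p hpC k]
  have hle1 : (m k : ℝ) ≤ q k * 2^i := by rw [← hfq]; exact Int.floor_le _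
  have hle2 : q k * 2^i < (m k : ℝ) + 1 := by
    rw [← hfq]
    exact Int.lt_floor_add_one _
  constructor
  · rw [div_le_iff₀ h2i]
    exact hle1
  · rw [lt_div_iff₀ h2i]
    exact hle2
end

section
/- Chan's z-order comparison algorithm is correct: for distinct points p, q ∈ ℕ^d (coordinates given as w-bit natural numbers), let i be the index maximizing ⌊log₂(p_i XOR q_i)⌋ (taking the smallest such index among ties as produced by the left-to-right scan that updates i = j only when ⌊log₂(p_i XOR q_i)⌋ < ⌊log₂(p_j XOR q_j)⌋). Then σ(p) < σ(q) if and only if p_i < q_i, where σ denotes the bit-interleaving (shuffle) map. -/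
/-- The shuffle (bit interleaving) of a point of `ℕ^d` with `w`-bit coordinates:
the natural number whose binary digits are, from most significant bit level `w-1`
down to level `0`, the corresponding bits of coordinates `0, 1, ..., d-1` in order. -/
def natShuffle (d w : ℕ) (p : Fin d → ℕ) : ℕ :=
  ∑ j ∈ Finset.range w, ∑ k : Fin d,
    if (p k).testBit j then 2 ^ (j * d + (d - 1 - k.val)) else 0

/-- Chan's left-to-right scan: starting from index `0`, update the current index `i`
to `j` exactly when the most significant set bit of `p i XOR q i` is strictly lower
than that of `p j XOR q j` (`Nat.size a = ⌊log₂ a⌋ + 1`, with `Nat.size 0 = 0`). -/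
def zIdx (d : ℕ) [NeZero d] (p q : Fin d → ℕ) : Fin d :=
  (List.finRange d).foldl
    (fun i j => if Nat.size (p i ^^^ q i) < Nat.size (p j ^^^ q j) then j else i)
    ⟨0, NeZero.pos d⟩

/-!
Two distinct naturals compare as their highest differing bit does. In the shuffle, bit `j` of
coordinate `k` sits at position `j * d + (d - 1 - k)`, so positions are ordered
lexicographically by bit level (larger first) and then coordinate index (smaller first). The
scan returns the coordinate `i` whose highest differing bit `b` is maximal, and among those the
first one; hence `(b, i)` is the highest position where `σ p` and `σ q` differ, and there they
differ exactly as `p i` and `q i` do at bit `b`.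
-/

namespace Nat

theorem lt_iff_testBit_of_testBit_ne {a b m : ℕ} (hm : a.testBit m ≠ b.testBit m)
    (habove : ∀ t, m < t → a.testBit t = b.testBit t) :
    a < b ↔ b.testBit m = true := by
  constructor
  · intro hab
    by_contra hb
    rw [Bool.not_eq_true] at hb
    have ha : a.testBit m = true := by simpa [hb] using hm
    exact (lt_of_testBit m hb ha fun t ht => (habove t ht).symm).not_gt hab
  · intro hb
    have ha : a.testBit m = false := by simpa [hb] using hm
    exact lt_of_testBit m ha hb habove

theorem testBit_eq_of_size_xor_le {a b t : ℕ} (h : (a ^^^ b).size ≤ t) :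
    a.testBit t = b.testBit t := by
  have hxor : (a ^^^ b).testBit t = false :=
    testBit_lt_two_pow ((size_le.1 h).trans_le (Nat.pow_le_pow_right two_pos le_rfl))
  simpa [testBit_xor] using hxor

theorem testBit_size_sub_one {x : ℕ} (hx : x ≠ 0) : x.testBit (x.size - 1) = true := by
  have hpos : 0 < x.size := size_pos.2 (Nat.pos_of_ne_zero hx)
  apply testBit_of_two_pow_le_and_two_pow_add_one_gt
  · exact lt_size.1 (by omega)
  · rw [Nat.sub_add_cancel hpos]
    exact lt_size_self x

theorem lt_iff_testBit_size_xor_sub_one {a b : ℕ} (h : a ≠ b) :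
    a < b ↔ b.testBit ((a ^^^ b).size - 1) = true := by
  have hxor : a ^^^ b ≠ 0 := fun h0 => h (Nat.xor_eq_zero_iff.1 h0)
  apply lt_iff_testBit_of_testBit_ne
  · simpa [testBit_xor] using testBit_size_sub_one hxor
  · intro t ht
    exact testBit_eq_of_size_xor_le (by omega)

theorem testBit_sum_two_pow (s : Finset ℕ) (t : ℕ) :
    (∑ i ∈ s, 2 ^ i).testBit t = true ↔ t ∈ s := by
  rw [← mem_bitIndices, ← List.mem_toFinset, Finset.toFinset_bitIndices_sum_two_pow]

end Nat

section Scan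

variable {ι α : Type*} [LinearOrder α]

def maxStep (v : ι → α) (i j : ι) : ι := if v i < v j then j else i

theorem foldl_maxStep_spec [LinearOrder ι] (v : ι → α) (l : List ι) (i : ι)
    (hl : (i :: l).Pairwise (· ≤ ·)) (k : ι) (hk : k ∈ i :: l) :
    v k ≤ v (l.foldl (maxStep v) i) ∧
      (k < l.foldl (maxStep v) i → v k < v (l.foldl (maxStep v) i)) := by
  induction l generalizing i k with
  | nil =>
    obtain rfl : k = i := List.mem_singleton.1 hk
    exact ⟨le_rfl, fun h => absurd h (lt_irrefl k)⟩
  | cons a l ih =>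
    obtain ⟨hi, hal⟩ := List.pairwise_cons.1 hl
    rw [List.foldl_cons]
    by_cases hia : v i < v a
    · have ih := ih a hal
      rw [show maxStep v i a = a from if_pos hia]
      rcases List.mem_cons.1 hk with rfl | hk
      · have hle := (ih a List.mem_cons_self).1
        exact ⟨(hia.trans_le hle).le, fun _ => hia.trans_le hle⟩
      · exact ih k hk
    · have ih := ih i (List.pairwise_cons.2 ⟨fun x hx => hi x (List.mem_cons_of_mem a hx),
        hal.of_cons⟩)
      rw [show maxStep v i a = i from if_neg hia]
      obtain ⟨hle, hlt⟩ := ih i List.mem_cons_self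
      have hai := not_lt.1 hia
      simp only [List.mem_cons] at hk
      rcases hk with rfl | rfl | hk
      · exact ⟨hle, hlt⟩
      · exact ⟨hai.trans hle,
          fun hkr => hai.trans_lt (hlt ((hi k List.mem_cons_self).trans_lt hkr))⟩
      · exact ih k (List.mem_cons_of_mem i hk)

end Scan

section Shuffle

variable {d : ℕ}

def shufflePos (d j : ℕ) (k : Fin d) : ℕ := j * d + (d - 1 - k)

theorem shufflePos_lt_shufflePos_of_lt {j j' : ℕ} (k k' : Fin d) (h : j < j') :
    shufflePos d j k < shufflePos d j' k' := by
  have hmul : (j + 1) * d ≤ j' * d := Nat.mul_le_mul_right d h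
  rw [add_mul, one_mul] at hmul
  unfold shufflePos
  omega

theorem shufflePos_lt_shufflePos_iff {j j' : ℕ} {k k' : Fin d} :
    shufflePos d j k < shufflePos d j' k' ↔ j < j' ∨ j = j' ∧ k' < k := by
  rcases lt_trichotomy j j' with h | rfl | h
  · simp [h, shufflePos_lt_shufflePos_of_lt k k' h]
  · simp only [shufflePos, lt_irrefl, false_or, true_and, Fin.lt_def]
    omega
  · simp [h.not_gt, h.ne', (shufflePos_lt_shufflePos_of_lt k' k h).not_gt]

theorem shufflePos_injective : Function.Injective fun x : ℕ × Fin d => shufflePos d x.1 x.2 := by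
  rintro ⟨j, k⟩ ⟨j', k'⟩ (h : shufflePos d j k = shufflePos d j' k')
  have hle := shufflePos_lt_shufflePos_iff.not.1 (le_of_eq h).not_gt
  have hge := shufflePos_lt_shufflePos_iff.not.1 (ge_of_eq h).not_gt
  simp only [Prod.mk.injEq]
  omega

theorem exists_shufflePos_eq [NeZero d] (t : ℕ) : ∃ j k, shufflePos d j k = t := by
  have hd := NeZero.pos d
  refine ⟨t / d, ⟨d - 1 - t % d, by omega⟩, ?_⟩
  have := Nat.div_add_mod' t d
  have := Nat.mod_lt t hd
  simp only [shufflePos]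
  omega

theorem natShuffle_eq_sum (w : ℕ) (p : Fin d → ℕ) :
    natShuffle d w p =
      ∑ x ∈ (Finset.range w ×ˢ Finset.univ).filter (fun x => (p x.2).testBit x.1),
        2 ^ shufflePos d x.1 x.2 := by
  rw [Finset.sum_filter, Finset.sum_product]
  rfl

theorem testBit_natShuffle {w : ℕ} {p : Fin d → ℕ} (hp : ∀ k, p k < 2 ^ w) (j : ℕ)
    (k : Fin d) :
    (natShuffle d w p).testBit (shufflePos d j k) = (p k).testBit j := by
  have hj : (p k).testBit j = true → j < w := fun h =>
    (Nat.pow_lt_pow_iff_right one_lt_two).1 ((Nat.ge_two_pow_of_testBit h).trans_lt (hp k))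
  rw [Bool.eq_iff_iff, natShuffle_eq_sum,
    ← Finset.sum_image fun x _ y _ h => shufflePos_injective h, Nat.testBit_sum_two_pow,
    shufflePos_injective.mem_finset_image (a := (j, k))]
  simpa using hj

end Shuffle

theorem zIdx_spec {d : ℕ} [NeZero d] (p q : Fin d → ℕ) (k : Fin d) :
    (p k ^^^ q k).size ≤ (p (zIdx d p q) ^^^ q (zIdx d p q)).size ∧
      (k < zIdx d p q → (p k ^^^ q k).size < (p (zIdx d p q) ^^^ q (zIdx d p q)).size) :=
  foldl_maxStep_spec (fun k => (p k ^^^ q k).size) (List.finRange d) ⟨0, NeZero.pos d⟩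
    (List.pairwise_cons.2
      ⟨fun x _ => Nat.zero_le x, (List.sortedLT_finRange d).pairwise.imp le_of_lt⟩)
    k (List.mem_cons_of_mem _ (List.mem_finRange k))

/-- Correctness of Chan's z-order comparison algorithm: for distinct `w`-bit points
`p ≠ q`, with `i` the index produced by the scan (the first index maximizing the
most significant differing bit), `σ(p) < σ(q)` iff `p i < q i`. -/
theorem stmt3 (d w : ℕ) [NeZero d] (p q : Fin d → ℕ)
    (hp : ∀ k, p k < 2 ^ w) (hq : ∀ k, q k < 2 ^ w) (hpq : p ≠ q) :
    natShuffle d w p < natShuffle d w q ↔ p (zIdx d p q) < q (zIdx d p q) := by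
  have hmax := zIdx_spec p q
  set i := zIdx d p q
  have hi : p i ≠ q i := by
    intro h
    refine hpq (funext fun k => Nat.xor_eq_zero_iff.1 (Nat.size_eq_zero.1 ?_))
    simpa [h] using (hmax k).1
  have hxor : p i ^^^ q i ≠ 0 := hi ∘ Nat.xor_eq_zero_iff.1
  set b := (p i ^^^ q i).size - 1
  have hb : (p i ^^^ q i).size = b + 1 := by
    have := Nat.size_pos.2 (Nat.pos_of_ne_zero hxor)
    omega
  rw [Nat.lt_iff_testBit_size_xor_sub_one hi,
    Nat.lt_iff_testBit_of_testBit_ne (m := shufflePos d b i), testBit_natShuffle hq]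
  · rw [testBit_natShuffle hp, testBit_natShuffle hq]
    simpa [Nat.testBit_xor] using Nat.testBit_size_sub_one hxor
  · intro t ht
    obtain ⟨j, k, rfl⟩ := exists_shufflePos_eq (d := d) t
    rw [testBit_natShuffle hp, testBit_natShuffle hq]
    apply Nat.testBit_eq_of_size_xor_le
    rcases shufflePos_lt_shufflePos_iff.1 ht with hj | ⟨rfl, hk⟩
    · have := (hmax k).1
      omega
    · have := (hmax k).2 hk
      omega
end

section
/- Let d be even and define the shift vectors v^{(j)} = (j/(d+1), ..., j/(d+1)) ∈ ℝ^d for j = 0, 1, ..., d. Then for any point p ∈ ℝ^d and any r = 2^{-ℓ} with ℓ ∈ ℕ, there exists j ∈ {0, 1, ..., d} such that p + v^{(j)} is (1/(2d+2))-central in its r-grid cell. -/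
/-!
Write `N = d + 1`. Rescaling by `2^ℓ`, the point `p + v⁽ʲ⁾` is central in coordinate `i`
exactly when `fract (2^ℓ pᵢ + 2^ℓ j / N + 1/(2N)) ≥ 1/N`, i.e. when `N` does not divide the
integer `⌊N 2^ℓ pᵢ + 1/2⌋ + 2^ℓ j`. Since `N` is odd, `2^ℓ` is invertible mod `N`, so each
coordinate rules out exactly one residue of `j` mod `N`; the `d` coordinates cannot rule out
all `d + 1` values `j = 0, …, d`.
-/

/-- The real-valued remainder of `x` modulo `r`, in `[0, r)` for `r > 0`. -/
noncomputable def rmod (x r : ℝ) : ℝ := x - r * ⌊x / r⌋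

open Finset

lemma rmod_eq_mul_fract (x : ℝ) {r : ℝ} (hr : r ≠ 0) : rmod x r = r * Int.fract (x / r) := by
  rw [rmod, Int.fract, mul_sub, mul_div_cancel₀ _ hr]

lemma le_fract_and_fract_lt_one_sub_iff {α : ℝ} (hα₀ : 0 ≤ α) (hα₁ : α < 1) (z : ℝ) :
    α ≤ Int.fract z ∧ Int.fract z < 1 - α ↔ 2 * α ≤ Int.fract (z + α) := by
  have hz₀ := Int.fract_nonneg z
  have hz₁ := Int.fract_lt_one z
  have hshift : Int.fract (z + α) = Int.fract (Int.fract z + α) := by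
    rw [← Int.fract_add_intCast (Int.fract z + α) ⌊z⌋, add_right_comm, Int.fract_add_floor]
  rcases lt_or_ge (Int.fract z + α) 1 with h | h
  · have hval : Int.fract (z + α) = Int.fract z + α := by
      rw [hshift, Int.fract_eq_self]
      constructor <;> linarith
    rw [hval]
    constructor
    · intro h'; linarith [h'.1]
    · intro h'; constructor <;> linarith
  · have hval : Int.fract (z + α) = Int.fract z + α - 1 := by
      rw [hshift, ← Int.fract_sub_one, Int.fract_eq_self]
      constructor <;> linarith
    rw [hval]
    constructor
    · intro h'; linarith [h'.2]
    · intro h'; linarith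

lemma rmod_central_iff {α r : ℝ} (hα₀ : 0 ≤ α) (hα₁ : α < 1) (hr : 0 < r) (x : ℝ) :
    α * r ≤ rmod x r ∧ rmod x r < (1 - α) * r ↔ 2 * α ≤ Int.fract (x / r + α) := by
  rw [rmod_eq_mul_fract x hr.ne', mul_comm α, mul_comm (1 - α), mul_le_mul_iff_right₀ hr,
    mul_lt_mul_iff_right₀ hr, le_fract_and_fract_lt_one_sub_iff hα₀ hα₁]

lemma fract_lt_inv_natCast_iff_dvd_floor {N : ℕ} (hN : 0 < N) (w : ℝ) :
    Int.fract w < (N : ℝ)⁻¹ ↔ (N : ℤ) ∣ ⌊N * w⌋ := by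
  have hNR : (0 : ℝ) < N := by exact_mod_cast hN
  have hsplit : ⌊N * w⌋ = ⌊N * Int.fract w⌋ + N * ⌊w⌋ := by
    rw [← Int.floor_add_intCast]
    congr 1
    push_cast
    rw [← mul_add, Int.fract_add_floor]
  have hnonneg : 0 ≤ ⌊N * Int.fract w⌋ := Int.floor_nonneg.2 (by positivity)
  have hlt : ⌊N * Int.fract w⌋ < N :=
    Int.floor_lt.2 (by push_cast; nlinarith [Int.fract_lt_one w])
  rw [hsplit, dvd_add_left (dvd_mul_right _ _), inv_eq_one_div, lt_div_iff₀ hNR, mul_comm]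
  constructor
  · intro h
    rw [Int.floor_eq_zero_iff.2 ⟨by positivity, h⟩]
    exact dvd_zero _
  · intro h
    exact (Int.floor_eq_zero_iff.1 (Int.eq_zero_of_dvd_of_nonneg_of_lt hnonneg hlt h)).2

theorem exists_lt_forall_not_dvd_add_mul {ι : Type*} [Fintype ι] {N a : ℕ} (ha : a.Coprime N)
    (c : ι → ℤ) (hι : Fintype.card ι < N) : ∃ j < N, ∀ i, ¬ (N : ℤ) ∣ c i + a * j := by
  have : NeZero N := ⟨by omega⟩
  set u := ZMod.unitOfCoprime a ha
  obtain ⟨x, -, hx⟩ := exists_mem_notMem_of_card_lt_card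
    (s := univ.image fun i => -(c i : ZMod N) * ↑u⁻¹) (t := univ) <| by
      calc #(univ.image _) ≤ #(univ : Finset ι) := card_image_le
        _ < #(univ : Finset (ZMod N)) := by rwa [card_univ, card_univ, ZMod.card]
  refine ⟨x.val, x.val_lt, fun i hdvd => hx (mem_image.2 ⟨i, mem_univ i, ?_⟩)⟩
  rw [← ZMod.intCast_zmod_eq_zero_iff_dvd] at hdvd
  push_cast at hdvd
  rw [ZMod.natCast_val, ZMod.cast_id] at hdvd
  rw [eq_comm, Units.eq_mul_inv_iff_mul_eq, ZMod.coe_unitOfCoprime]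
  linear_combination hdvd

/-- Chan's shifting lemma: for even `d`, any `p ∈ ℝ^d` and any `r = 2^{-ℓ}`, some
shift `v⁽ʲ⁾ = (j/(d+1),…,j/(d+1))`, `0 ≤ j ≤ d`, makes `p + v⁽ʲ⁾`
`(1/(2d+2))`-central in its `r`-grid cell. -/
theorem stmt5 (d : ℕ) (hd : Even d) (p : Fin d → ℝ) (ℓ : ℕ) :
    ∃ j ≤ d, ∀ i : Fin d,
      (1 / (2 * (d:ℝ) + 2)) * (1/2 : ℝ) ^ ℓ ≤
          rmod (p i + (j:ℝ) / ((d:ℝ) + 1)) ((1/2 : ℝ) ^ ℓ) ∧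
        rmod (p i + (j:ℝ) / ((d:ℝ) + 1)) ((1/2 : ℝ) ^ ℓ) <
          (1 - 1 / (2 * (d:ℝ) + 2)) * (1/2 : ℝ) ^ ℓ := by
  set N := d + 1
  have hNR : (N : ℝ) = d + 1 := Nat.cast_succ d
  have hcop : (2 ^ ℓ).Coprime N := Nat.Coprime.pow_left ℓ (Nat.coprime_two_left.2 hd.add_one)
  obtain ⟨j, hjN, hj⟩ := exists_lt_forall_not_dvd_add_mul hcop
    (fun i => ⌊N * 2 ^ ℓ * p i + 1 / 2⌋) (by simp [N])
  refine ⟨j, by omega, fun i => ?_⟩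
  have hα : 1 / (2 * (d : ℝ) + 2) < 1 := by rw [div_lt_one (by positivity)]; linarith
  rw [rmod_central_iff (by positivity) hα (by positivity), ← not_lt]
  have h2α : 2 * (1 / (2 * (d : ℝ) + 2)) = (N : ℝ)⁻¹ := by rw [hNR]; field_simp
  rw [h2α, fract_lt_inv_natCast_iff_dvd_floor (Nat.succ_pos d)]
  have hscale : (N : ℝ) * ((p i + j / (d + 1)) / (1 / 2) ^ ℓ + 1 / (2 * d + 2))
      = N * 2 ^ ℓ * p i + 1 / 2 + ((2 ^ ℓ * j : ℕ) : ℤ) := by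
    rw [hNR, one_div, inv_pow]; push_cast; field_simp; ring
  rw [hscale, Int.floor_add_intCast]
  exact_mod_cast hj i
end

section
/- Given a point q ∈ [0,1)^d and 0 < ε < 1/(2d+2), there exists j with 0 ≤ j ≤ d and r of the form 2^{-ℓ} with r/(4d+4) ≤ ε < r/(2d+2), such that the closed hypercube C_ε(q + v^{(j)}) with center q + v^{(j)} and edge length 2ε is contained in a single r-grid cell. -/
/-- For `q ∈ [0,1)^d` (`d` even) and `0 < ε < 1/(2d+2)`, there is a shift index
`j ≤ d` and a dyadic scale `r = 2^{-ℓ}` with `r/(4d+4) ≤ ε < r/(2d+2)` such that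
the closed cube of half-edge `ε` centered at `q + v⁽ʲ⁾` lies in a single
`r`-grid cell. -/
theorem stmt7 (d : ℕ) (hd : Even d) (q : Fin d → ℝ)
    (hq : ∀ i, q i ∈ Set.Ico (0:ℝ) 1)
    (ε : ℝ) (hε0 : 0 < ε) (hε : ε < 1 / (2 * (d:ℝ) + 2)) :
    ∃ j ≤ d, ∃ ℓ : ℕ,
      (1/2 : ℝ) ^ ℓ / (4 * (d:ℝ) + 4) ≤ ε ∧ ε < (1/2 : ℝ) ^ ℓ / (2 * (d:ℝ) + 2) ∧
      ∃ m : Fin d → ℤ, ∀ y : Fin d → ℝ,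
        (∀ i, |y i - (q i + (j:ℝ) / ((d:ℝ) + 1))| ≤ ε) →
        ∀ i, (m i : ℝ) * (1/2 : ℝ) ^ ℓ ≤ y i ∧ y i < ((m i : ℝ) + 1) * (1/2 : ℝ) ^ ℓ := by
  classical
  have hDpos : (0:ℝ) < 2 * (d:ℝ) + 2 := by positivity
  -- choose the scale ℓ
  have hexp : ∃ m : ℕ, (1/2:ℝ) ^ m ≤ 2 * ((2*(d:ℝ)+2) * ε) := by
    obtain ⟨m, hm⟩ := exists_pow_lt_of_lt_one
      (show (0:ℝ) < 2 * ((2*(d:ℝ)+2) * ε) by positivity)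
      (show (1/2:ℝ) < 1 by norm_num)
    exact ⟨m, hm.le⟩
  set ℓ : ℕ := Nat.find hexp with hℓdef
  set r : ℝ := (1/2:ℝ) ^ ℓ with hrdef
  have hrpos : 0 < r := by positivity
  have hle : r ≤ 2 * ((2*(d:ℝ)+2) * ε) := Nat.find_spec hexp
  have ha1 : (2*(d:ℝ)+2) * ε < 1 := by
    have := (lt_div_iff₀ hDpos).mp hε
    linarith [this]
  have hgt : (2*(d:ℝ)+2) * ε < r := by
    rcases Nat.eq_zero_or_pos ℓ with h0 | hpos
    · rw [hrdef, h0]; simpa using ha1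
    · have hmin : ¬ ((1/2:ℝ) ^ (ℓ - 1) ≤ 2 * ((2*(d:ℝ)+2) * ε)) :=
        Nat.find_min hexp (Nat.sub_lt hpos one_pos)
      push_neg at hmin
      have hsp : (1/2:ℝ) ^ ℓ = (1/2) ^ (ℓ - 1) * (1/2) := by
        rw [← pow_succ]; congr 1; omega
      rw [hrdef, hsp]; linarith
  -- the two scale inequalities in the required form
  have hscale1 : r / (4 * (d:ℝ) + 4) ≤ ε := by
    rw [div_le_iff₀ (by positivity)]; linarith
  have hscale2 : ε < r / (2 * (d:ℝ) + 2) := by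
    rw [lt_div_iff₀ hDpos]; linarith
  -- `r * 2^ℓ = 1`
  have hr2 : r * 2 ^ ℓ = 1 := by
    rw [hrdef, ← mul_pow]; norm_num
  -- centers
  set c : ℕ → Fin d → ℝ := fun j i => q i + (j:ℝ) / ((d:ℝ) + 1) with hcdef
  -- bad shifts
  set Bad : ℕ → Prop := fun j => ∃ i : Fin d, ∃ k : ℤ,
      (k:ℝ) * r - ε ≤ c j i ∧ c j i < (k:ℝ) * r + ε with hBdef
  -- for each coordinate, at most one bad shift
  have key : ∀ (i : Fin d) (j j' : ℕ), j ≤ d → j' ≤ d →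
      (∃ k : ℤ, (k:ℝ) * r - ε ≤ c j i ∧ c j i < (k:ℝ) * r + ε) →
      (∃ k : ℤ, (k:ℝ) * r - ε ≤ c j' i ∧ c j' i < (k:ℝ) * r + ε) →
      j = j' := by
    rintro i j j' hj hj' ⟨k, hk1, hk2⟩ ⟨k', hk1', hk2'⟩
    have hd1 : (0:ℝ) < (d:ℝ) + 1 := by positivity
    set t : ℤ := ((j:ℤ) - (j':ℤ)) * 2 ^ ℓ - (k - k') * ((d:ℤ) + 1) with htdef
    have hteq : (t:ℝ) * r / ((d:ℝ) + 1) = c j i - c j' i - ((k:ℝ) - (k':ℝ)) * r := by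
      have hcc : c j i - c j' i = ((j:ℝ) - (j':ℝ)) / ((d:ℝ) + 1) := by
        simp only [hcdef]; ring
      rw [hcc, htdef]
      push_cast
      field_simp
      nlinarith [hr2]
    have htabs : |(t:ℝ)| * r / ((d:ℝ) + 1) < 2 * ε := by
      have h1 : (t:ℝ) * r / ((d:ℝ) + 1) < 2 * ε := by rw [hteq]; linarith
      have h2 : -(2 * ε) < (t:ℝ) * r / ((d:ℝ) + 1) := by rw [hteq]; linarith
      rcases abs_cases (t:ℝ) with ⟨h, _⟩ | ⟨h, _⟩
      · rw [h]; exact h1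
      · rw [h, show -(t:ℝ) * r / ((d:ℝ)+1) = -((t:ℝ) * r / ((d:ℝ)+1)) by ring]
        linarith
    have ht0 : t = 0 := by
      by_contra ht
      have h1 : (1:ℝ) ≤ |(t:ℝ)| := by
        rw [← Int.cast_abs]
        exact_mod_cast Int.one_le_abs (by omega)
      have hmono : r / ((d:ℝ) + 1) ≤ |(t:ℝ)| * r / ((d:ℝ) + 1) := by
        gcongr
        exact le_mul_of_one_le_left hrpos.le h1
      have h3 : r / ((d:ℝ) + 1) < 2 * ε := lt_of_le_of_lt hmono htabs
      rw [div_lt_iff₀ hd1] at h3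
      nlinarith
    -- from t = 0 : (d+1) ∣ (j - j') * 2^ℓ, and d+1 is odd hence coprime to 2^ℓ
    have ht0' : ((j:ℤ) - (j':ℤ)) * 2 ^ ℓ - (k - k') * ((d:ℤ) + 1) = 0 := by
      rw [← htdef]; exact ht0
    have hdvd : ((d:ℤ) + 1) ∣ ((j:ℤ) - (j':ℤ)) * 2 ^ ℓ :=
      ⟨k - k', by linear_combination ht0'⟩
    have hodd : Odd (d + 1) := Even.add_one hd
    have hcop : Nat.Coprime (d + 1) (2 ^ ℓ) :=
      Nat.Coprime.pow_right ℓ (Nat.coprime_two_right.mpr hodd)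
    have hcopz : IsCoprime ((d:ℤ) + 1) ((2:ℤ) ^ ℓ) := by
      apply Int.isCoprime_iff_gcd_eq_one.mpr
      have hg : Int.gcd ((d:ℤ) + 1) ((2:ℤ) ^ ℓ) = Nat.gcd (d + 1) (2 ^ ℓ) := by
        rw [Int.gcd]; norm_cast
      rw [hg]; exact hcop
    have hdvd2 : ((d:ℤ) + 1) ∣ ((j:ℤ) - (j':ℤ)) := hcopz.dvd_of_dvd_mul_right hdvd
    have hz : (j:ℤ) - (j':ℤ) = 0 := by
      refine Int.eq_zero_of_abs_lt_dvd hdvd2 ?_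
      have : |(j:ℤ) - (j':ℤ)| ≤ (d:ℤ) := by
        rw [abs_sub_le_iff]; omega
      omega
    omega
  -- pigeonhole: find a good shift j
  set B : Finset ℕ := (Finset.range (d+1)).filter (fun j => Bad j) with hBsetdef
  have hcard : B.card ≤ d := by
    have hsub : B ⊆ Finset.univ.biUnion (fun i : Fin d =>
        (Finset.range (d+1)).filter (fun j =>
          ∃ k : ℤ, (k:ℝ) * r - ε ≤ c j i ∧ c j i < (k:ℝ) * r + ε)) := by
      intro j hj
      rw [hBsetdef, Finset.mem_filter] at hj
      obtain ⟨hj1, i, k, hk⟩ := hj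
      exact Finset.mem_biUnion.mpr ⟨i, Finset.mem_univ i,
        Finset.mem_filter.mpr ⟨hj1, k, hk⟩⟩
    calc B.card ≤ _ := Finset.card_le_card hsub
      _ ≤ ∑ i : Fin d, ((Finset.range (d+1)).filter (fun j =>
          ∃ k : ℤ, (k:ℝ) * r - ε ≤ c j i ∧ c j i < (k:ℝ) * r + ε)).card :=
        Finset.card_biUnion_le
      _ ≤ ∑ _i : Fin d, 1 := by
        apply Finset.sum_le_sum
        intro i _
        apply Finset.card_le_one.mpr
        intro a ha b hb
        rw [Finset.mem_filter, Finset.mem_range] at ha hb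
        exact key i a b (by omega) (by omega) ha.2 hb.2
      _ = d := by simp
  have hgood : ∃ j ≤ d, ¬ Bad j := by
    by_contra h
    push_neg at h
    have hsub : Finset.range (d+1) ⊆ B := by
      intro j hj
      rw [Finset.mem_range] at hj
      exact Finset.mem_filter.mpr ⟨Finset.mem_range.mpr hj, h j (by omega)⟩
    have := Finset.card_le_card hsub
    simp only [Finset.card_range] at this
    omega
  obtain ⟨j, hjd, hjgood⟩ := hgood
  refine ⟨j, hjd, ℓ, hscale1, hscale2, fun i => ⌊(c j i - ε) / r⌋, ?_⟩
  intro y hy i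
  have hyi := hy i
  rw [abs_le] at hyi
  have hci : c j i = q i + (j:ℝ) / ((d:ℝ) + 1) := rfl
  set mi : ℤ := ⌊(c j i - ε) / r⌋ with hmidef
  have hfl : (mi:ℝ) ≤ (c j i - ε) / r := Int.floor_le _
  have hfl' : (c j i - ε) / r < (mi:ℝ) + 1 := Int.lt_floor_add_one _
  have h1 : (mi:ℝ) * r ≤ c j i - ε := by
    rw [← le_div_iff₀ hrpos]; exact hfl
  have h2 : c j i - ε < ((mi:ℝ) + 1) * r := by
    rw [← div_lt_iff₀ hrpos]; exact hfl'
  constructor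
  · have : c j i - ε ≤ y i := by rw [hci]; linarith [hyi.1]
    linarith
  · -- if not, the cell boundary (mi+1)*r would witness badness of j at i
    by_contra hcon
    push_neg at hcon
    have hyub : y i ≤ c j i + ε := by rw [hci]; linarith [hyi.2]
    apply hjgood
    refine ⟨i, mi + 1, ?_, ?_⟩
    · push_cast; linarith
    · push_cast; linarith
end
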